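/- arXiv:1201.4744 — 4 statements merged into one kernel-verified Lean document; each statement's English description precedes it below -/
import Mathlib

section
/- Let h' ⊆ h ⊊ k ⊊ g ⊆ g' be nested compact Lie algebras with a fixed biinvariant inner product on g'. Let m (resp. m') be the orthogonal complement of h (resp. h') in k, and s (resp. s') the orthogonal complement of k in g (resp. g'). If there exist sequences X_r, Y_r in m ⊕ s with |[X_r^m, Y_r^m]^m| = 1 for all r and [X_r, Y_r] → 0, then the same sequences lie in m' ⊕ s' and satisfy |[X_r^{m'}, Y_r^{m'}]^{m'}| ≥ 1 with [X_r,Y_r] → 0; hence the bracket inequality condition (*) fails for the chain (h', k, g') whenever it fails in this strong sense for (h, k, g). -/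
open scoped RealInnerProductSpace

/-- Let `h' ⊆ h ⊊ k ⊊ g ⊆ g'` be nested compact Lie algebras with a fixed
biinvariant inner product on `g'`.  Let `m` (resp. `m'`) be the orthogonal
complement of `h` (resp. `h'`) in `k`, and `s` (resp. `s'`) the orthogonal
complement of `k` in `g` (resp. `g'`).  If there are sequences `X_r, Y_r` in
`m ⊕ s` with `‖[X_rᵐ, Y_rᵐ]ᵐ‖ = 1` and `[X_r, Y_r] → 0`, then the same
sequences lie in `m' ⊕ s'` and satisfy `‖[X_r^{m'}, Y_r^{m'}]^{m'}‖ ≥ 1`;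
hence condition (*) fails for the chain `(h', k, g')`. -/
theorem stmt1 {g' : Type*} [NormedAddCommGroup g'] [InnerProductSpace ℝ g']
    [FiniteDimensional ℝ g']
    -- the Lie bracket on g'
    (lb : g' →ₗ[ℝ] g' →ₗ[ℝ] g')
    (hanti : ∀ X Y : g', lb X Y = - lb Y X)
    (hjac : ∀ X Y Z : g', lb X (lb Y Z) = lb (lb X Y) Z + lb Y (lb X Z))
    (hbi : ∀ X Y Z : g', ⟪lb X Y, Z⟫ = ⟪X, lb Y Z⟫)
    -- nested subalgebras h' ⊆ h ⊊ k ⊊ g ⊆ g'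
    (h' h k g : Submodule ℝ g')
    (hh'sub : ∀ X ∈ h', ∀ Y ∈ h', lb X Y ∈ h')
    (hhsub : ∀ X ∈ h, ∀ Y ∈ h, lb X Y ∈ h)
    (hksub : ∀ X ∈ k, ∀ Y ∈ k, lb X Y ∈ k)
    (hgsub : ∀ X ∈ g, ∀ Y ∈ g, lb X Y ∈ g)
    (hh'h : h' ≤ h) (hhk : h ≤ k) (hhk' : h ≠ k) (hkg : k ≤ g) (hkg' : k ≠ g)
    (m s m' s' : Submodule ℝ g')
    (hm : m = k ⊓ hᗮ) (hs : s = g ⊓ kᗮ)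
    (hm' : m' = k ⊓ h'ᗮ) (hs' : s' = kᗮ)
    -- the sequences X_r, Y_r in m ⊕ s
    (X Y : ℕ → g')
    (hXY : ∀ r, X r ∈ m ⊔ s ∧ Y r ∈ m ⊔ s)
    (hnorm : ∀ r, ‖((Submodule.orthogonalProjectionOnto m
      (lb (Submodule.orthogonalProjectionOnto m (X r) : g') (Submodule.orthogonalProjectionOnto m (Y r) : g')) : m) : g')‖ = 1)
    (hlim : Filter.Tendsto (fun r => lb (X r) (Y r)) Filter.atTop (nhds 0)) :
    (∀ r, X r ∈ m' ⊔ s' ∧ Y r ∈ m' ⊔ s' ∧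
      1 ≤ ‖((Submodule.orthogonalProjectionOnto m'
        (lb (Submodule.orthogonalProjectionOnto m' (X r) : g')
            (Submodule.orthogonalProjectionOnto m' (Y r) : g')) : m') : g')‖) ∧
    ¬ ∃ C : ℝ, 0 < C ∧ ∀ Z W : g', Z ∈ m' ⊔ s' → W ∈ m' ⊔ s' →
      ‖((Submodule.orthogonalProjectionOnto m'
        (lb (Submodule.orthogonalProjectionOnto m' Z : g') (Submodule.orthogonalProjectionOnto m' W : g')) : m') : g')‖
        ≤ C * ‖lb Z W‖ := by
  have hmm' : m ≤ m' := by
    rw [hm, hm']; exact inf_le_inf_left k (Submodule.orthogonal_le hh'h)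
  have hss' : s ≤ s' := by rw [hs, hs']; exact inf_le_right
  have hmk : m ≤ k := by rw [hm]; exact inf_le_left
  have hm'k : m' ≤ k := by rw [hm']; exact inf_le_left
  have hsk : s ≤ kᗮ := by rw [hs]; exact inf_le_right
  have proj_eq : ∀ v ∈ m ⊔ s,
      ((Submodule.orthogonalProjectionOnto m' v : g')) = ((Submodule.orthogonalProjectionOnto m v : g')) := by
    intro v hv
    obtain ⟨a, ha, b, hb, rfl⟩ := Submodule.mem_sup.mp hv
    have hbm : b ∈ mᗮ := (Submodule.orthogonal_le hmk) (hsk hb)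
    have hbm' : b ∈ m'ᗮ := (Submodule.orthogonal_le hm'k) (hsk hb)
    have h1 : ((Submodule.orthogonalProjectionOnto m (a + b) : g')) = a := by
      rw [map_add, Submodule.coe_add, ← Submodule.starProjection_apply, Submodule.starProjection_eq_self_iff.mpr ha,
        Submodule.orthogonalProjectionOnto_apply_of_mem_orthogonal hbm]
      simp
    have h2 : ((Submodule.orthogonalProjectionOnto m' (a + b) : g')) = a := by
      rw [map_add, Submodule.coe_add, ← Submodule.starProjection_apply, Submodule.starProjection_eq_self_iff.mpr (hmm' ha),
        Submodule.orthogonalProjectionOnto_apply_of_mem_orthogonal hbm']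
      simp
    rw [h1, h2]
  have norm_mono : ∀ z : g',
      ‖((Submodule.orthogonalProjectionOnto m z : g'))‖ ≤ ‖((Submodule.orthogonalProjectionOnto m' z : g'))‖ := by
    intro z
    have hmem : z - (Submodule.orthogonalProjectionOnto m' z : g') ∈ mᗮ :=
      (Submodule.orthogonal_le hmm') (by rw [← Submodule.starProjection_apply]; exact Submodule.sub_starProjection_mem_orthogonal (K := m') z)
    have h0 : Submodule.orthogonalProjectionOnto m (z - (Submodule.orthogonalProjectionOnto m' z : g')) = 0 :=
      Submodule.orthogonalProjectionOnto_apply_of_mem_orthogonal hmem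
    have hz : Submodule.orthogonalProjectionOnto m z
        = Submodule.orthogonalProjectionOnto m ((Submodule.orthogonalProjectionOnto m' z : g')) := by
      have := map_sub (Submodule.orthogonalProjectionOnto m) z ((Submodule.orthogonalProjectionOnto m' z : g'))
      rw [h0] at this
      exact (sub_eq_zero.mp this.symm)
    calc ‖((Submodule.orthogonalProjectionOnto m z : g'))‖
        = ‖(Submodule.orthogonalProjectionOnto m ((Submodule.orthogonalProjectionOnto m' z : g')))‖ := by
          rw [hz]; rfl
      _ ≤ ‖((Submodule.orthogonalProjectionOnto m' z : g'))‖ := by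
          simpa using
            (Submodule.orthogonalProjectionOnto m).le_of_opNorm_le (Submodule.orthogonalProjectionOnto_norm_le (K := m))
              ((Submodule.orthogonalProjectionOnto m' z : g'))
  have hge : ∀ r, 1 ≤ ‖((Submodule.orthogonalProjectionOnto m'
      (lb (Submodule.orthogonalProjectionOnto m' (X r) : g')
          (Submodule.orthogonalProjectionOnto m' (Y r) : g')) : m') : g')‖ := by
    intro r
    rw [proj_eq _ (hXY r).1, proj_eq _ (hXY r).2]
    calc (1 : ℝ) = ‖((Submodule.orthogonalProjectionOnto m
          (lb (Submodule.orthogonalProjectionOnto m (X r) : g')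
              (Submodule.orthogonalProjectionOnto m (Y r) : g')) : m) : g')‖ := (hnorm r).symm
      _ ≤ _ := norm_mono _
  constructor
  · intro r
    exact ⟨(sup_le_sup hmm' hss') (hXY r).1, (sup_le_sup hmm' hss') (hXY r).2, hge r⟩
  · rintro ⟨C, hC, hb⟩
    have hlim' : Filter.Tendsto (fun r => ‖lb (X r) (Y r)‖) Filter.atTop (nhds 0) := by
      simpa using hlim.norm
    have hev : ∀ᶠ r in Filter.atTop, ‖lb (X r) (Y r)‖ < 1 / C :=
      hlim'.eventually (gt_mem_nhds (by positivity))
    obtain ⟨r, hr⟩ := hev.exists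
    have h1 := hb (X r) (Y r) ((sup_le_sup hmm' hss') (hXY r).1)
      ((sup_le_sup hmm' hss') (hXY r).2)
    have h2 := hge r
    have : C * ‖lb (X r) (Y r)‖ < C * (1 / C) := by
      exact mul_lt_mul_of_pos_left hr hC
    rw [mul_one_div_cancel (ne_of_gt hC)] at this
    linarith
end

section
/- Let (h, k, g) be a chain of compact Lie algebras with orthogonal decomposition g = h ⊕ m ⊕ s as usual, such that any two commuting elements of m are linearly dependent. If the set {[U,V] : U,V ∈ m} intersects the topological closure of {[W,Z]^k : W,Z ∈ s} only in {0}, then there exists C > 0 such that |X^m ∧ Y^m| ≤ C|[X,Y]| for all X, Y ∈ m ⊕ s. -/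
open scoped RealInnerProductSpace

set_option maxHeartbeats 1600000 in
/-- Let `(h, k, g)` be a chain of compact Lie algebras with orthogonal
decomposition `g = h ⊕ m ⊕ s`, such that any two commuting elements of `m` are
linearly dependent.  If the set `{[U,V] : U,V ∈ m}` meets the closure of
`{[W,Z]ᵏ : W,Z ∈ s}` only in `{0}`, then there is `C > 0` with
`|Xᵐ ∧ Yᵐ| ≤ C‖[X,Y]‖` for all `X, Y ∈ m ⊕ s`  (condition (**)). -/
theorem stmt2 {g : Type*} [NormedAddCommGroup g] [InnerProductSpace ℝ g]
    [FiniteDimensional ℝ g]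
    -- the Lie bracket on g
    (lb : g →ₗ[ℝ] g →ₗ[ℝ] g)
    (hanti : ∀ X Y : g, lb X Y = - lb Y X)
    (hjac : ∀ X Y Z : g, lb X (lb Y Z) = lb (lb X Y) Z + lb Y (lb X Z))
    -- the inner product is biinvariant
    (hbi : ∀ X Y Z : g, ⟪lb X Y, Z⟫ = ⟪X, lb Y Z⟫)
    -- subalgebras h ⊆ k of g
    (h k : Submodule ℝ g)
    (hhsub : ∀ X ∈ h, ∀ Y ∈ h, lb X Y ∈ h)
    (hksub : ∀ X ∈ k, ∀ Y ∈ k, lb X Y ∈ k)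
    (hhk : h ≤ k)
    (m s : Submodule ℝ g)
    (hm : m = k ⊓ hᗮ) (hs : s = kᗮ)
    -- two commuting elements of m are linearly dependent
    (hdep : ∀ U ∈ m, ∀ V ∈ m, lb U V = 0 → ¬ LinearIndependent ℝ ![U, V])
    -- the brackets of m meet the closure of the k-components of brackets of s only in 0
    (hint : {x : g | ∃ U ∈ m, ∃ V ∈ m, x = lb U V} ∩
      closure {x : g | ∃ W ∈ s, ∃ Z ∈ s, x = ((k.orthogonalProjectionOnto (lb W Z) : k) : g)}
      ⊆ {0}) :
    ∃ C : ℝ, 0 < C ∧ ∀ X Y : g, X ∈ m ⊔ s → Y ∈ m ⊔ s →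
      Real.sqrt (‖(m.orthogonalProjectionOnto X : g)‖ ^ 2 * ‖(m.orthogonalProjectionOnto Y : g)‖ ^ 2
          - ⟪(m.orthogonalProjectionOnto X : g), (m.orthogonalProjectionOnto Y : g)⟫ ^ 2)
        ≤ C * ‖lb X Y‖ := by
  by_contra hC
  push_neg at hC
  -- basic structural facts
  have hmk : m ≤ k := hm ▸ inf_le_left
  have hsm : s ≤ mᗮ := hs ▸ Submodule.orthogonal_le hmk
  have hXX : ∀ X : g, lb X X = 0 := by
    intro X
    have h1 := hanti X X
    rw [eq_neg_iff_add_eq_zero, ← two_smul ℝ] at h1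
    simpa using h1
  -- brackets of k with kᗮ land in kᗮ
  have hks : ∀ A ∈ k, ∀ W ∈ kᗮ, lb A W ∈ kᗮ := by
    intro A hA W hW
    rw [Submodule.mem_orthogonal]
    intro B hB
    have h1 : ⟪B, lb A W⟫ = -⟪lb A B, W⟫ := by
      rw [real_inner_comm, hanti A W, inner_neg_left, hbi W A B, real_inner_comm]
    rw [h1, hW _ (hksub A hA B hB), neg_zero]
  -- projection of an element of `m ⊔ s` to `m` and its complement in `s`
  have hPm : ∀ X ∈ m ⊔ s, X - ((m.orthogonalProjectionOnto X : m) : g) ∈ s := by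
    intro X hX
    obtain ⟨u, hu, w, hw, rfl⟩ := Submodule.mem_sup.mp hX
    have : ((m.orthogonalProjectionOnto (u + w) : m) : g) = u :=
      by rw [← Submodule.starProjection_apply]; exact Submodule.eq_starProjection_of_mem_orthogonal' hu (hsm hw) rfl
    rw [this]
    simpa using hw
  -- normalized failure sequence
  have key : ∀ C : ℝ, 0 < C → ∃ X Y : g, X ∈ m ⊔ s ∧ Y ∈ m ⊔ s ∧
      ‖((m.orthogonalProjectionOnto X : m) : g)‖ = 1 ∧
      ‖((m.orthogonalProjectionOnto Y : m) : g)‖ = 1 ∧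
      ⟪((m.orthogonalProjectionOnto X : m) : g), ((m.orthogonalProjectionOnto Y : m) : g)⟫ = 0 ∧
      ‖lb X Y‖ < 1 / C := by
    intro C hCpos
    obtain ⟨X, Y, hX, hY, hlt⟩ := hC C hCpos
    set U : g := ((m.orthogonalProjectionOnto X : m) : g) with hUdef
    set V : g := ((m.orthogonalProjectionOnto Y : m) : g) with hVdef
    have hD : 0 < ‖U‖ ^ 2 * ‖V‖ ^ 2 - ⟪U, V⟫ ^ 2 := by
      have h0 : 0 ≤ C * ‖lb X Y‖ := by positivity
      have h1 : 0 < Real.sqrt (‖U‖ ^ 2 * ‖V‖ ^ 2 - ⟪U, V⟫ ^ 2) := lt_of_le_of_lt h0 hlt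
      exact Real.sqrt_pos.mp h1
    have hUpos : 0 < ‖U‖ := by
      by_contra hU
      push_neg at hU
      have : U = 0 := norm_le_zero_iff.mp hU
      rw [this] at hD
      simp at hD
    set t : ℝ := ⟪U, V⟫ / ‖U‖ ^ 2 with htdef
    have ht : t * ‖U‖ ^ 2 = ⟪U, V⟫ := by
      rw [htdef, div_mul_cancel₀ _ (by positivity)]
    clear_value t
    set Y₁ : g := Y - t • X with hY1def
    set V₁ : g := V - t • U with hV1def
    have hPY1 : ((m.orthogonalProjectionOnto Y₁ : m) : g) = V₁ := by
      rw [hY1def, map_sub, map_smul]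
      push_cast
      rw [hV1def, ← hUdef, ← hVdef]
    have hUV1 : ⟪U, V₁⟫ = 0 := by
      rw [hV1def, inner_sub_right, real_inner_smul_right, real_inner_self_eq_norm_sq]
      nlinarith [ht]
    have hV1sq : ‖U‖ ^ 2 * ‖V₁‖ ^ 2 = ‖U‖ ^ 2 * ‖V‖ ^ 2 - ⟪U, V⟫ ^ 2 := by
      rw [hV1def, norm_sub_sq_real, real_inner_smul_right, norm_smul,
        Real.norm_eq_abs, mul_pow, sq_abs]
      have hc : ⟪V, U⟫ = ⟪U, V⟫ := real_inner_comm U V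
      linear_combination (t * ‖U‖ ^ 2 + ⟪U, V⟫ - 2 * ⟪V, U⟫) * ht + (-2 * ⟪U, V⟫) * hc
    have hV1pos : 0 < ‖V₁‖ := by
      by_contra hV1
      push_neg at hV1
      have : V₁ = 0 := norm_le_zero_iff.mp hV1
      rw [this] at hV1sq
      simp at hV1sq
      nlinarith
    have hsqrt : Real.sqrt (‖U‖ ^ 2 * ‖V‖ ^ 2 - ⟪U, V⟫ ^ 2) = ‖U‖ * ‖V₁‖ := by
      rw [← hV1sq, show ‖U‖ ^ 2 * ‖V₁‖ ^ 2 = (‖U‖ * ‖V₁‖) ^ 2 by ring]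
      exact Real.sqrt_sq (by positivity)
    refine ⟨‖U‖⁻¹ • X, ‖V₁‖⁻¹ • Y₁, Submodule.smul_mem _ _ hX, Submodule.smul_mem _ _ ?_, ?_, ?_, ?_, ?_⟩
    · exact Submodule.sub_mem _ hY (Submodule.smul_mem _ _ hX)
    · rw [map_smul]
      push_cast
      rw [← hUdef, norm_smul, Real.norm_eq_abs, abs_of_pos (by positivity)]
      field_simp
    · rw [map_smul]
      push_cast
      rw [hPY1, norm_smul, Real.norm_eq_abs, abs_of_pos (by positivity)]
      field_simp
    · rw [map_smul, map_smul]
      push_cast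
      rw [← hUdef, hPY1, real_inner_smul_left, real_inner_smul_right, hUV1]
      ring
    · have hbr : lb (‖U‖⁻¹ • X) (‖V₁‖⁻¹ • Y₁) = (‖U‖⁻¹ * ‖V₁‖⁻¹) • lb X Y := by
        have h2 : lb X Y₁ = lb X Y := by
          rw [hY1def, map_sub, map_smul, hXX, smul_zero, sub_zero]
        simp only [map_smul, LinearMap.smul_apply, h2, smul_smul]
        rw [mul_comm ‖V₁‖⁻¹ ‖U‖⁻¹]
      rw [hbr, norm_smul, Real.norm_eq_abs, abs_of_pos (by positivity)]
      have hlt2 : ‖lb X Y‖ < ‖U‖ * ‖V₁‖ / C := by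
        rw [lt_div_iff₀ hCpos, mul_comm]
        rw [hsqrt] at hlt
        exact hlt
      calc ‖U‖⁻¹ * ‖V₁‖⁻¹ * ‖lb X Y‖
          < ‖U‖⁻¹ * ‖V₁‖⁻¹ * (‖U‖ * ‖V₁‖ / C) := by
            apply mul_lt_mul_of_pos_left hlt2 (by positivity)
        _ = 1 / C := by field_simp
  -- choose a normalized failure sequence
  choose Xs Ys hXs hYs hU1 hV1 horth hsmall using fun n : ℕ => key ((n : ℝ) + 1) (by positivity)
  set U : ℕ → g := fun n => ((m.orthogonalProjectionOnto (Xs n) : m) : g) with hUdef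
  set V : ℕ → g := fun n => ((m.orthogonalProjectionOnto (Ys n) : m) : g) with hVdef
  set Ws : ℕ → g := fun n => Xs n - U n with hWdef
  set Zs : ℕ → g := fun n => Ys n - V n with hZdef
  have hUm : ∀ n, U n ∈ m := fun n => SetLike.coe_mem _
  have hVm : ∀ n, V n ∈ m := fun n => SetLike.coe_mem _
  have hWs : ∀ n, Ws n ∈ s := fun n => hPm _ (hXs n)
  have hZs : ∀ n, Zs n ∈ s := fun n => hPm _ (hYs n)
  -- compactness: extract a convergent subsequence of the pairs (U n, V n)
  have hcomp : IsCompact ((Metric.sphere (0 : g) 1) ×ˢ (Metric.sphere (0 : g) 1)) :=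
    (isCompact_sphere 0 1).prod (isCompact_sphere 0 1)
  have hmemS : ∀ n, (U n, V n) ∈ (Metric.sphere (0 : g) 1) ×ˢ (Metric.sphere (0 : g) 1) := by
    intro n
    refine Set.mem_prod.mpr ⟨?_, ?_⟩
    · exact mem_sphere_zero_iff_norm.mpr (hU1 n)
    · exact mem_sphere_zero_iff_norm.mpr (hV1 n)
  obtain ⟨q, hq, φ, hφ, hlim⟩ := hcomp.tendsto_subseq hmemS
  have hUlim : Filter.Tendsto (fun n => U (φ n)) Filter.atTop (nhds q.1) :=
    (continuous_fst.tendsto q).comp hlim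
  have hVlim : Filter.Tendsto (fun n => V (φ n)) Filter.atTop (nhds q.2) :=
    (continuous_snd.tendsto q).comp hlim
  -- joint continuity of the bracket
  have hlbcont : Continuous (fun p : g × g => lb p.1 p.2) := by
    let lb2 : g →ₗ[ℝ] (g →L[ℝ] g) :=
      { toFun := fun x => LinearMap.toContinuousLinearMap (lb x)
        map_add' := by intro a b; ext z; simp
        map_smul' := by intro a b; ext z; simp }
    let lbc : g →L[ℝ] (g →L[ℝ] g) := LinearMap.toContinuousLinearMap lb2
    have heq : (fun p : g × g => lb p.1 p.2) = fun p : g × g => lbc p.1 p.2 := by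
      funext p
      simp [lbc, lb2]
    rw [heq]
    exact lbc.continuous₂
  have hbrlim : Filter.Tendsto (fun n => lb (U (φ n)) (V (φ n))) Filter.atTop
      (nhds (lb q.1 q.2)) :=
    (hlbcont.tendsto q).comp hlim
  -- the brackets of the original sequence tend to zero
  have hXYlim : Filter.Tendsto (fun n => lb (Xs (φ n)) (Ys (φ n))) Filter.atTop (nhds 0) := by
    apply squeeze_zero_norm (fun n => ?_) tendsto_one_div_add_atTop_nhds_zero_nat
    have h1 : ‖lb (Xs (φ n)) (Ys (φ n))‖ ≤ 1 / ((φ n : ℝ) + 1) := le_of_lt (hsmall (φ n))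
    refine h1.trans (one_div_le_one_div_of_le (by positivity) ?_)
    have : (n : ℝ) ≤ (φ n : ℝ) := Nat.cast_le.mpr hφ.le_apply
    linarith
  -- key algebraic identity for the k-components
  have hkeyid : ∀ n, ((k.orthogonalProjectionOnto (lb (Zs n) (Ws n)) : k) : g)
      = lb (U n) (V n) - ((k.orthogonalProjectionOnto (lb (Xs n) (Ys n)) : k) : g) := by
    intro n
    have hUVk : lb (U n) (V n) ∈ k := hksub _ (hmk (hUm n)) _ (hmk (hVm n))
    have hUZ : lb (U n) (Zs n) ∈ kᗮ := hks _ (hmk (hUm n)) _ (hs ▸ hZs n)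
    have hWV : lb (Ws n) (V n) ∈ kᗮ := by
      rw [hanti]
      exact Submodule.neg_mem _ (hks _ (hmk (hVm n)) _ (hs ▸ hWs n))
    have hx : Xs n = U n + Ws n := by simp [hWdef]
    have hy : Ys n = V n + Zs n := by simp [hZdef]
    have hdecomp : lb (Xs n) (Ys n)
        = lb (U n) (V n) + lb (U n) (Zs n) + lb (Ws n) (V n) + lb (Ws n) (Zs n) := by
      nth_rewrite 1 [hx, hy]
      simp only [map_add, LinearMap.add_apply]
      abel
    have hproj : ((k.orthogonalProjectionOnto (lb (Xs n) (Ys n)) : k) : g)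
        = lb (U n) (V n) + ((k.orthogonalProjectionOnto (lb (Ws n) (Zs n)) : k) : g) := by
      rw [hdecomp, map_add, map_add, map_add, Submodule.coe_add, Submodule.coe_add,
        Submodule.coe_add, ← Submodule.starProjection_apply, Submodule.starProjection_eq_self_iff.mpr hUVk,
        Submodule.orthogonalProjectionOnto_apply_of_mem_orthogonal hUZ,
        Submodule.orthogonalProjectionOnto_apply_of_mem_orthogonal hWV]
      simp
    have hZW : lb (Zs n) (Ws n) = - lb (Ws n) (Zs n) := hanti _ _
    have h3 : ((k.orthogonalProjectionOnto (lb (Ws n) (Zs n)) : k) : g)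
        = ((k.orthogonalProjectionOnto (lb (Xs n) (Ys n)) : k) : g) - lb (U n) (V n) := by
      rw [hproj]; abel
    rw [hZW, map_neg, Submodule.coe_neg, h3]
    abel
  -- pass to the limit
  have hPkcont : Continuous (fun x : g => ((k.orthogonalProjectionOnto x : k) : g)) :=
    continuous_subtype_val.comp k.orthogonalProjectionOnto.continuous
  have hPklim : Filter.Tendsto
      (fun n => ((k.orthogonalProjectionOnto (lb (Xs (φ n)) (Ys (φ n))) : k) : g))
      Filter.atTop (nhds 0) := by
    have := (hPkcont.tendsto 0).comp hXYlim
    simpa [Function.comp_def] using this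
  have hZWlim : Filter.Tendsto
      (fun n => ((k.orthogonalProjectionOnto (lb (Zs (φ n)) (Ws (φ n))) : k) : g))
      Filter.atTop (nhds (lb q.1 q.2)) := by
    have heq : (fun n => ((k.orthogonalProjectionOnto (lb (Zs (φ n)) (Ws (φ n))) : k) : g))
        = fun n => lb (U (φ n)) (V (φ n))
            - ((k.orthogonalProjectionOnto (lb (Xs (φ n)) (Ys (φ n))) : k) : g) := by
      funext n
      exact hkeyid (φ n)
    rw [heq]
    simpa using hbrlim.sub hPklim
  have hclos : lb q.1 q.2 ∈
      closure {x : g | ∃ W ∈ s, ∃ Z ∈ s, x = ((k.orthogonalProjectionOnto (lb W Z) : k) : g)} :=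
    mem_closure_of_tendsto hZWlim
      (Filter.Eventually.of_forall fun n => ⟨Zs (φ n), hZs _, Ws (φ n), hWs _, rfl⟩)
  have hmcl : IsClosed (m : Set g) := Submodule.closed_of_finiteDimensional m
  have hq1m : q.1 ∈ m :=
    hmcl.mem_of_tendsto hUlim (Filter.Eventually.of_forall fun n => hUm (φ n))
  have hq2m : q.2 ∈ m :=
    hmcl.mem_of_tendsto hVlim (Filter.Eventually.of_forall fun n => hVm (φ n))
  have hzero : lb q.1 q.2 = 0 := hint ⟨⟨q.1, hq1m, q.2, hq2m, rfl⟩, hclos⟩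
  -- the limits are orthonormal, hence linearly independent: contradiction
  have hq1n : ‖q.1‖ = 1 := by
    refine tendsto_nhds_unique ((continuous_norm.tendsto q.1).comp hUlim) ?_
    have : (fun n => ‖U (φ n)‖) = fun _ => (1 : ℝ) := funext fun n => hU1 (φ n)
    rw [show ((fun x => ‖x‖) ∘ fun n => U (φ n)) = fun n => ‖U (φ n)‖ from rfl, this]
    exact tendsto_const_nhds
  have hq2n : ‖q.2‖ = 1 := by
    refine tendsto_nhds_unique ((continuous_norm.tendsto q.2).comp hVlim) ?_
    have : (fun n => ‖V (φ n)‖) = fun _ => (1 : ℝ) := funext fun n => hV1 (φ n)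
    rw [show ((fun x => ‖x‖) ∘ fun n => V (φ n)) = fun n => ‖V (φ n)‖ from rfl, this]
    exact tendsto_const_nhds
  have hqorth : ⟪q.1, q.2⟫ = 0 := by
    have hicont : Continuous (fun p : g × g => (⟪p.1, p.2⟫ : ℝ)) := continuous_inner
    have h1 : Filter.Tendsto (fun n => (⟪U (φ n), V (φ n)⟫ : ℝ)) Filter.atTop
        (nhds ⟪q.1, q.2⟫) := (hicont.tendsto q).comp hlim
    have h2 : Filter.Tendsto (fun n => (⟪U (φ n), V (φ n)⟫ : ℝ)) Filter.atTop (nhds 0) := by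
      have heq2 : (fun n => (⟪U (φ n), V (φ n)⟫ : ℝ)) = fun _ => (0 : ℝ) :=
        funext fun n => horth (φ n)
      rw [heq2]
      exact tendsto_const_nhds
    exact tendsto_nhds_unique h1 h2
  have hqorth' : ⟪q.2, q.1⟫ = 0 := by
    rw [real_inner_comm]
    exact hqorth
  have hindep : LinearIndependent ℝ ![q.1, q.2] := by
    refine Orthonormal.linearIndependent (𝕜 := ℝ) ?_
    rw [orthonormal_iff_ite]
    intro i j
    fin_cases i <;> fin_cases j <;>
      simp [real_inner_self_eq_norm_sq, hq1n, hq2n, hqorth, hqorth']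
  exact hdep q.1 hq1m q.2 hq2m hzero hindep
end

section
/- In so(5) with the chain h = Δ_θ so(2) = span{cos θ E_{23} + sin θ E_{45}} ⊂ k = so(4) (the lower-right 4×4 block) ⊂ so(5), with sin θ ≠ 0: the vectors X = E_{34} + E_{13} and Y = E_{24} − E_{12} satisfy [X,Y] = 0, while the bracket of the k-components E_{34}, E_{24} equals E_{23}, which has nonzero orthogonal projection onto m = k ⊖ h. Hence condition (*) fails for this chain. -/
open Matrix

noncomputable section

/-- `E i j = e_{ij} - e_{ji}` in the real `5 × 5` matrices (0-based indices:
`E i j` here corresponds to `E_{(i+1)(j+1)}` in the paper). -/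
def E (i j : Fin 5) : Matrix (Fin 5) (Fin 5) ℝ :=
  Matrix.single i j 1 - Matrix.single j i 1

/-- The biinvariant inner product `⟨A,B⟩ = -tr(AB)`. -/
def ip {n : ℕ} (A B : Matrix (Fin n) (Fin n) ℝ) : ℝ := - (A * B).trace

/-- The associated norm. -/
def nrm {n : ℕ} (A : Matrix (Fin n) (Fin n) ℝ) : ℝ := Real.sqrt (ip A A)

/-- Orthogonal complement with respect to `ip`. -/
def perp {n : ℕ} (W : Submodule ℝ (Matrix (Fin n) (Fin n) ℝ)) :
    Submodule ℝ (Matrix (Fin n) (Fin n) ℝ) where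
  carrier := {v | ∀ w ∈ W, ip v w = 0}
  add_mem' := by
    intro a b ha hb w hw
    have h1 := ha w hw
    have h2 := hb w hw
    simp only [ip, Matrix.add_mul, Matrix.trace_add] at *
    linarith
  zero_mem' := by intro w hw; simp [ip]
  smul_mem' := by
    intro c a ha w hw
    have h1 := ha w hw
    have h2 : (a * w).trace = 0 := by simp only [ip] at h1; linarith
    simp [ip, Matrix.smul_mul, Matrix.trace_smul, h2]

/-- The Lie algebra `so(n)` of skew-symmetric matrices, as a submodule. -/
def so (n : ℕ) : Submodule ℝ (Matrix (Fin n) (Fin n) ℝ) where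
  carrier := {A | Aᵀ = -A}
  add_mem' := by
    intro a b ha hb
    simp only [Set.mem_setOf_eq, Matrix.transpose_add] at *
    rw [ha, hb]; abel
  zero_mem' := by simp
  smul_mem' := by
    intro c a ha
    simp only [Set.mem_setOf_eq, Matrix.transpose_smul] at *
    rw [ha, smul_neg]

/-- `P` is the orthogonal projection onto `m` with respect to `ip`. -/
def IsOrthProj {n : ℕ} (m : Submodule ℝ (Matrix (Fin n) (Fin n) ℝ))
    (P : Matrix (Fin n) (Fin n) ℝ →ₗ[ℝ] Matrix (Fin n) (Fin n) ℝ) : Prop :=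
  (∀ v, P v ∈ m) ∧ (∀ v ∈ m, P v = v) ∧ (∀ v, v - P v ∈ perp m)

/-- Condition (*) of Schwachhöfer–Tapp for the decomposition `p = m ⊕ s`, where
`P` is the orthogonal projection onto `m`:  there is `C > 0` with
`‖[Xᵐ,Yᵐ]ᵐ‖ ≤ C‖[X,Y]‖` for all `X, Y ∈ m ⊕ s`. -/
def CondStar {n : ℕ} (m s : Submodule ℝ (Matrix (Fin n) (Fin n) ℝ))
    (P : Matrix (Fin n) (Fin n) ℝ →ₗ[ℝ] Matrix (Fin n) (Fin n) ℝ) : Prop :=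
  ∃ C > 0, ∀ X Y, X ∈ m ⊔ s → Y ∈ m ⊔ s →
    nrm (P ⁅P X, P Y⁆) ≤ C * nrm ⁅X, Y⁆

lemma mem_perp {n : ℕ} {W : Submodule ℝ (Matrix (Fin n) (Fin n) ℝ)} {x} :
    x ∈ perp W ↔ ∀ w ∈ W, ip x w = 0 := Iff.rfl

lemma mem_so {n : ℕ} {A : Matrix (Fin n) (Fin n) ℝ} : A ∈ so n ↔ Aᵀ = -A := Iff.rfl

lemma ip_comm {n : ℕ} (A B : Matrix (Fin n) (Fin n) ℝ) : ip A B = ip B A := by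
  unfold ip; rw [Matrix.trace_mul_comm]

lemma ip_add_right {n : ℕ} (A B C : Matrix (Fin n) (Fin n) ℝ) :
    ip A (B + C) = ip A B + ip A C := by
  unfold ip; rw [Matrix.mul_add, Matrix.trace_add]; ring

lemma ip_sub_right {n : ℕ} (A B C : Matrix (Fin n) (Fin n) ℝ) :
    ip A (B - C) = ip A B - ip A C := by
  unfold ip; rw [Matrix.mul_sub, Matrix.trace_sub]; ring

lemma ip_smul_right {n : ℕ} (c : ℝ) (A B : Matrix (Fin n) (Fin n) ℝ) :
    ip A (c • B) = c * ip A B := by simp [ip, Matrix.mul_smul]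

lemma mem_perp_span {n : ℕ} {S : Set (Matrix (Fin n) (Fin n) ℝ)}
    {x : Matrix (Fin n) (Fin n) ℝ} (hx : ∀ w ∈ S, ip x w = 0) :
    x ∈ perp (Submodule.span ℝ S) := by
  rw [mem_perp]
  intro w hw
  induction hw using Submodule.span_induction with
  | mem w hw => exact hx w hw
  | zero => simp [ip]
  | add a b _ _ ha hb => rw [ip_add_right, ha, hb]; ring
  | smul c a _ ha => rw [ip_smul_right, ha]; ring

lemma E_skew (i j : Fin 5) : (E i j)ᵀ = -(E i j) := by
  ext a b
  simp only [E, Matrix.transpose_apply, Matrix.sub_apply, Matrix.neg_apply,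
    Matrix.single, Matrix.of_apply]
  by_cases h1 : i = a <;> by_cases h2 : j = b <;> by_cases h3 : i = b <;> by_cases h4 : j = a <;>
    simp [h1, h2, h3, h4, and_comm]

lemma ip_self_eq {A : Matrix (Fin 5) (Fin 5) ℝ} (hA : Aᵀ = -A) :
    ip A A = ∑ i, ∑ j, (A i j)^2 := by
  have hs : ∀ i j, A i j * A j i = -(A i j ^ 2) := by
    intro i j
    have h1 : A j i = -A i j := by
      have := congrFun (congrFun hA i) j
      simpa using this
    rw [h1]; ring
  simp only [ip, Matrix.trace, Matrix.mul_apply, Matrix.diag_apply, hs,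
    Finset.sum_neg_distrib, neg_neg]

lemma ip_self_pos {A : Matrix (Fin 5) (Fin 5) ℝ} (hA : Aᵀ = -A) (h0 : A ≠ 0) :
    0 < ip A A := by
  rw [ip_self_eq hA]
  rcases (Finset.sum_nonneg fun i _ => Finset.sum_nonneg fun j _ => sq_nonneg (A i j)).lt_or_eq with hlt | heq
  · exact hlt
  · exfalso
    apply h0
    ext i j
    have h1 := (Finset.sum_eq_zero_iff_of_nonneg
      (fun i _ => Finset.sum_nonneg fun j _ => sq_nonneg (A i j))).mp heq.symm i (Finset.mem_univ i)
    have h2 := (Finset.sum_eq_zero_iff_of_nonneg (fun j _ => sq_nonneg (A i j))).mp h1 j (Finset.mem_univ j)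
    simpa using pow_eq_zero_iff (n := 2) (by norm_num) |>.mp h2

set_option maxHeartbeats 1000000 in
lemma ip_vals :
    ip (E 1 2) (E 1 2) = 2 ∧ ip (E 3 4) (E 3 4) = 2 ∧ ip (E 1 2) (E 3 4) = 0 ∧
    ip (E 3 4) (E 1 2) = 0 ∧ ip (E 2 3) (E 1 2) = 0 ∧ ip (E 2 3) (E 3 4) = 0 ∧
    ip (E 1 3) (E 1 2) = 0 ∧ ip (E 1 3) (E 3 4) = 0 ∧
    ip (E 0 2) (E 1 2) = 0 ∧ ip (E 0 2) (E 1 3) = 0 ∧ ip (E 0 2) (E 1 4) = 0 ∧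
    ip (E 0 2) (E 2 3) = 0 ∧ ip (E 0 2) (E 2 4) = 0 ∧ ip (E 0 2) (E 3 4) = 0 ∧
    ip (E 0 1) (E 1 2) = 0 ∧ ip (E 0 1) (E 1 3) = 0 ∧ ip (E 0 1) (E 1 4) = 0 ∧
    ip (E 0 1) (E 2 3) = 0 ∧ ip (E 0 1) (E 2 4) = 0 ∧ ip (E 0 1) (E 3 4) = 0 := by
  refine ⟨?_,?_,?_,?_,?_,?_,?_,?_,?_,?_,?_,?_,?_,?_,?_,?_,?_,?_,?_,?_⟩ <;>
    (simp [ip, E, Matrix.trace, Matrix.mul_apply, Matrix.diag, Fin.sum_univ_five,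
      Matrix.single]; try norm_num)

set_option maxHeartbeats 1000000 in
lemma bracket_zero : (⁅E 2 3 + E 0 2, E 1 3 - E 0 1⁆ : Matrix (Fin 5) (Fin 5) ℝ) = 0 := by
  ext a b
  fin_cases a <;> fin_cases b <;>
    (simp [Ring.lie_def, E, Matrix.mul_apply, Fin.sum_univ_five, Matrix.single,
      Matrix.sub_apply, Matrix.add_apply]; try norm_num)

set_option maxHeartbeats 1000000 in
lemma bracket_E : (⁅E 2 3, E 1 3⁆ : Matrix (Fin 5) (Fin 5) ℝ) = E 1 2 := by
  ext a b
  fin_cases a <;> fin_cases b <;>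
    (simp [Ring.lie_def, E, Matrix.mul_apply, Fin.sum_univ_five, Matrix.single,
      Matrix.sub_apply]; try norm_num)

set_option maxHeartbeats 2000000 in
/-- In `so(5)` with the chain `h = Δ_θ so(2) ⊂ k = so(4) ⊂ so(5)` and
`sin θ ≠ 0`: the vectors `X = E₃₄ + E₁₃` and `Y = E₂₄ − E₁₂` (paper's 1-based
indices) commute, while `[E₃₄, E₂₄] = E₂₃` has nonzero orthogonal projection
onto `m = k ⊖ h`; hence condition (*) fails for this chain. -/
theorem stmt3 (θ : ℝ) (hθ : Real.sin θ ≠ 0)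
    (h k m s : Submodule ℝ (Matrix (Fin 5) (Fin 5) ℝ))
    (hh : h = Submodule.span ℝ {Real.cos θ • E 1 2 + Real.sin θ • E 3 4})
    (hk : k = Submodule.span ℝ ({E 1 2, E 1 3, E 1 4, E 2 3, E 2 4, E 3 4} :
      Set (Matrix (Fin 5) (Fin 5) ℝ)))
    (hm : m = k ⊓ perp h) (hs : s = so 5 ⊓ perp k)
    (P : Matrix (Fin 5) (Fin 5) ℝ →ₗ[ℝ] Matrix (Fin 5) (Fin 5) ℝ)
    (hP : IsOrthProj m P) :
    (⁅E 2 3 + E 0 2, E 1 3 - E 0 1⁆ : Matrix (Fin 5) (Fin 5) ℝ) = 0 ∧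
    (⁅E 2 3, E 1 3⁆ : Matrix (Fin 5) (Fin 5) ℝ) = E 1 2 ∧
    P (E 1 2) ≠ 0 ∧
    ¬ CondStar m s P := by
  obtain ⟨hP1, hP2, hP3⟩ := hP
  obtain ⟨i1, i2, i3, i4, i5, i6, i7, i8, i9, i10, i11, i12, i13, i14, i15, i16, i17, i18, i19,
    i20⟩ := ip_vals
  -- basic membership facts
  have hE12k : E 1 2 ∈ k := by rw [hk]; exact Submodule.subset_span (by simp)
  have hE34k : E 3 4 ∈ k := by rw [hk]; exact Submodule.subset_span (by simp)
  have hE23k : E 2 3 ∈ k := by rw [hk]; exact Submodule.subset_span (by simp)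
  have hE13k : E 1 3 ∈ k := by rw [hk]; exact Submodule.subset_span (by simp)
  have hkso : ∀ x ∈ k, xᵀ = -x := by
    intro x hx
    rw [hk] at hx
    have : Submodule.span ℝ ({E 1 2, E 1 3, E 1 4, E 2 3, E 2 4, E 3 4} :
        Set (Matrix (Fin 5) (Fin 5) ℝ)) ≤ so 5 := by
      rw [Submodule.span_le]
      intro y hy
      simp only [Set.mem_insert_iff, Set.mem_singleton_iff] at hy
      rcases hy with h'|h'|h'|h'|h'|h' <;> subst h' <;> exact mem_so.mpr (E_skew _ _)
    exact mem_so.mp (this hx)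
  have hperph : ∀ x : Matrix (Fin 5) (Fin 5) ℝ,
      ip x (Real.cos θ • E 1 2 + Real.sin θ • E 3 4) = 0 → x ∈ perp h := by
    intro x hx
    rw [hh]
    apply mem_perp_span
    intro w hw
    rw [Set.mem_singleton_iff] at hw
    subst hw
    exact hx
  have ipv : ∀ x : Matrix (Fin 5) (Fin 5) ℝ,
      ip x (Real.cos θ • E 1 2 + Real.sin θ • E 3 4)
        = Real.cos θ * ip x (E 1 2) + Real.sin θ * ip x (E 3 4) := by
    intro x; rw [ip_add_right, ip_smul_right, ip_smul_right]
  have hE23m : E 2 3 ∈ m := by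
    rw [hm]
    exact Submodule.mem_inf.mpr ⟨hE23k, hperph _ (by rw [ipv, i5, i6]; ring)⟩
  have hE13m : E 1 3 ∈ m := by
    rw [hm]
    exact Submodule.mem_inf.mpr ⟨hE13k, hperph _ (by rw [ipv, i7, i8]; ring)⟩
  have hE02pk : E 0 2 ∈ perp k := by
    rw [hk]
    apply mem_perp_span
    intro w hw
    simp only [Set.mem_insert_iff, Set.mem_singleton_iff] at hw
    rcases hw with h'|h'|h'|h'|h'|h' <;> subst h' <;> assumption
  have hE01pk : E 0 1 ∈ perp k := by
    rw [hk]
    apply mem_perp_span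
    intro w hw
    simp only [Set.mem_insert_iff, Set.mem_singleton_iff] at hw
    rcases hw with h'|h'|h'|h'|h'|h' <;> subst h' <;> assumption
  have hE02s : E 0 2 ∈ s := by
    rw [hs]; exact Submodule.mem_inf.mpr ⟨mem_so.mpr (E_skew 0 2), hE02pk⟩
  have hE01s : E 0 1 ∈ s := by
    rw [hs]; exact Submodule.mem_inf.mpr ⟨mem_so.mpr (E_skew 0 1), hE01pk⟩
  have hmso : ∀ x ∈ m, xᵀ = -x := by
    intro x hx
    rw [hm, Submodule.mem_inf] at hx
    exact hkso x hx.1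
  have hperpkm : ∀ x ∈ perp k, x ∈ perp m := by
    intro x hx
    rw [mem_perp] at hx ⊢
    intro w hw
    rw [hm, Submodule.mem_inf] at hw
    exact hx w hw.1
  have hPzero : ∀ x ∈ perp m, P x = 0 := by
    intro x hx
    have h1 : P x ∈ perp m := by
      have e : P x = x - (x - P x) := by abel
      rw [e]
      exact Submodule.sub_mem _ hx (hP3 x)
    have h2 : ip (P x) (P x) = 0 := mem_perp.mp h1 (P x) (hP1 x)
    by_contra hne
    exact absurd h2 (ne_of_gt (ip_self_pos (hmso _ (hP1 x)) hne))
  -- the witness w ∈ m with ip (E 1 2) w ≠ 0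
  have hwm : (Real.sin θ ^ 2 • E 1 2 - (Real.sin θ * Real.cos θ) • E 3 4) ∈ m := by
    rw [hm]
    refine Submodule.mem_inf.mpr ⟨Submodule.sub_mem _ (Submodule.smul_mem _ _ hE12k)
      (Submodule.smul_mem _ _ hE34k), hperph _ ?_⟩
    rw [ipv]
    have e1 : ip (Real.sin θ ^ 2 • E 1 2 - (Real.sin θ * Real.cos θ) • E 3 4) (E 1 2)
        = Real.sin θ ^ 2 * 2 := by
      rw [ip_comm, ip_sub_right, ip_smul_right, ip_smul_right, i1, i3]; ring
    have e2 : ip (Real.sin θ ^ 2 • E 1 2 - (Real.sin θ * Real.cos θ) • E 3 4) (E 3 4)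
        = -(Real.sin θ * Real.cos θ) * 2 := by
      rw [ip_comm, ip_sub_right, ip_smul_right, ip_smul_right, i2, i4]; ring
    rw [e1, e2]; ring
  have hPE12ne : P (E 1 2) ≠ 0 := by
    intro h0
    have h1 : E 1 2 ∈ perp m := by
      have := hP3 (E 1 2)
      rwa [h0, sub_zero] at this
    have h2 := mem_perp.mp h1 _ hwm
    rw [ip_sub_right, ip_smul_right, ip_smul_right, i1, i3] at h2
    apply hθ
    have h3 : Real.sin θ ^ 2 = 0 := by linarith
    exact pow_eq_zero_iff (two_ne_zero) |>.mp h3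
  refine ⟨bracket_zero, bracket_E, hPE12ne, ?_⟩
  rintro ⟨C, hC, hineq⟩
  have hX : E 2 3 + E 0 2 ∈ m ⊔ s :=
    Submodule.add_mem _ (Submodule.mem_sup_left hE23m) (Submodule.mem_sup_right hE02s)
  have hY : E 1 3 - E 0 1 ∈ m ⊔ s :=
    Submodule.sub_mem _ (Submodule.mem_sup_left hE13m) (Submodule.mem_sup_right hE01s)
  have hPX : P (E 2 3 + E 0 2) = E 2 3 := by
    rw [map_add, hP2 _ hE23m, hPzero _ (hperpkm _ hE02pk), add_zero]
  have hPY : P (E 1 3 - E 0 1) = E 1 3 := by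
    rw [map_sub, hP2 _ hE13m, hPzero _ (hperpkm _ hE01pk), sub_zero]
  have key := hineq _ _ hX hY
  rw [hPX, hPY, bracket_E, bracket_zero] at key
  have hz : nrm (0 : Matrix (Fin 5) (Fin 5) ℝ) = 0 := by simp [nrm, ip]
  rw [hz, mul_zero] at key
  have hpos : 0 < nrm (P (E 1 2)) := by
    apply Real.sqrt_pos.mpr
    exact ip_self_pos (hmso _ (hP1 _)) hPE12ne
  linarith
end
end

section
/- Consider the chain su(2) ⊂ so(4) ⊂ so(5), where so(4) is the lower-right 4×4 block and su(2) is one of the two normal factors of so(4), and let m = so(4) ⊖ su(2) (the other su(2) factor) and s = so(5) ⊖ so(4). Then every nonzero element of the set {[U,V] : U,V ∈ m} is a matrix of rank 4, while every bracket [W,Z] with W,Z ∈ s has rank at most 2. Consequently {[U,V] : U,V ∈ m} ∩ closure{[W,Z]^k : W,Z ∈ s} = {0}. -/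
open Matrix

noncomputable section

/-! ### Auxiliary machinery -/

def Xm (a b c : ℝ) : Matrix (Fin 5) (Fin 5) ℝ :=
  !![0,0,0,0,0; 0,0,a,b,c; 0,-a,0,-c,b; 0,-b,c,0,-a; 0,-c,-b,a,0]

def Ym (x1 x2 x3 x4 x5 x6 : ℝ) : Matrix (Fin 5) (Fin 5) ℝ :=
  !![0,0,0,0,0; 0,0,x1,x2,x3; 0,-x1,0,x4,x5; 0,-x2,-x4,0,x6; 0,-x3,-x5,-x6,0]

def Wm (w1 w2 w3 w4 : ℝ) : Matrix (Fin 5) (Fin 5) ℝ :=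
  !![0,w1,w2,w3,w4; -w1,0,0,0,0; -w2,0,0,0,0; -w3,0,0,0,0; -w4,0,0,0,0]

lemma Ym_eq (x1 x2 x3 x4 x5 x6 : ℝ) :
    x1 • E 1 2 + (x2 • E 1 3 + (x3 • E 1 4 + (x4 • E 2 3 + (x5 • E 2 4 + x6 • E 3 4)))) =
      Ym x1 x2 x3 x4 x5 x6 := by
  ext i j
  fin_cases i <;> fin_cases j <;>
    simp [E, Ym, Matrix.single, Matrix.of_apply, Matrix.vecHead, Matrix.vecTail]


lemma ip_Ym_one (x1 x2 x3 x4 x5 x6 : ℝ) :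
    ip (Ym x1 x2 x3 x4 x5 x6) (E 1 2 + E 3 4) = 2*x1 + 2*x6 := by
  simp [ip, Matrix.trace, Matrix.diag, Matrix.mul_apply, Fin.sum_univ_five, E, Ym,
    Matrix.single, Matrix.of_apply, Matrix.vecHead, Matrix.vecTail]
  ring

lemma ip_Ym_two (x1 x2 x3 x4 x5 x6 : ℝ) :
    ip (Ym x1 x2 x3 x4 x5 x6) (E 1 3 - E 2 4) = 2*x2 - 2*x5 := by
  simp [ip, Matrix.trace, Matrix.diag, Matrix.mul_apply, Fin.sum_univ_five, E, Ym,
    Matrix.single, Matrix.of_apply, Matrix.vecHead, Matrix.vecTail]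
  ring

lemma ip_Ym_three (x1 x2 x3 x4 x5 x6 : ℝ) :
    ip (Ym x1 x2 x3 x4 x5 x6) (E 1 4 + E 2 3) = 2*x3 + 2*x4 := by
  simp [ip, Matrix.trace, Matrix.diag, Matrix.mul_apply, Fin.sum_univ_five, E, Ym,
    Matrix.single, Matrix.of_apply, Matrix.vecHead, Matrix.vecTail]
  ring

lemma Ym_Xm (a b c : ℝ) : Ym a b c (-c) b (-a) = Xm a b c := by
  ext i j
  fin_cases i <;> fin_cases j <;> simp [Ym, Xm, Matrix.vecHead, Matrix.vecTail]

lemma Xm_zero : Xm 0 0 0 = 0 := by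
  ext i j; fin_cases i <;> fin_cases j <;> simp [Xm, Matrix.vecHead, Matrix.vecTail]

lemma trace_mul_sbm (M : Matrix (Fin 5) (Fin 5) ℝ) (i j : Fin 5) :
    (M * Matrix.single i j 1).trace = M j i := by
  rw [Matrix.trace]
  rw [Finset.sum_eq_single j]
  · simp [Matrix.diag]
  · intro a _ ha
    simpa [Matrix.diag] using Matrix.mul_single_apply_of_ne (i := i) (j := j) (c := (1:ℝ)) (a := a) (b := a) (hbj := ha) (M := M)
  · simp

lemma ip_E (M : Matrix (Fin 5) (Fin 5) ℝ) (i j : Fin 5) :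
    ip M (E i j) = M i j - M j i := by
  simp only [ip, E, mul_sub, Matrix.trace_sub, trace_mul_sbm]
  ring

lemma Xm_mul (a b c a' b' c' : ℝ) :
    Xm a b c * Xm a' b' c' =
      !![0,0,0,0,0;
         0, -(a*a'+b*b'+c*c'), b*c'-c*b', c*a'-a*c', a*b'-b*a';
         0, c*b'-b*c', -(a*a'+b*b'+c*c'), b*a'-a*b', c*a'-a*c';
         0, a*c'-c*a', a*b'-b*a', -(a*a'+b*b'+c*c'), c*b'-b*c';
         0, b*a'-a*b', a*c'-c*a', b*c'-c*b', -(a*a'+b*b'+c*c')] := by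
  ext i j
  fin_cases i <;> fin_cases j <;>
    (simp [Xm, Matrix.mul_apply, Fin.sum_univ_five, Matrix.vecHead, Matrix.vecTail]; try ring)

lemma Xm_bracket (a b c a' b' c' : ℝ) :
    ⁅Xm a b c, Xm a' b' c'⁆ =
      Xm (2*(b*c' - c*b')) (2*(c*a' - a*c')) (2*(a*b' - b*a')) := by
  rw [Ring.lie_def, Xm_mul, Xm_mul]
  ext i j
  fin_cases i <;> fin_cases j <;>
    (simp [Xm, Matrix.sub_apply, Matrix.vecHead, Matrix.vecTail]; try ring)

lemma Xm_sq (a b c : ℝ) :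
    Xm a b c * Xm a b c =
      Matrix.diagonal (fun i => if i = 0 then 0 else -(a^2+b^2+c^2)) := by
  ext i j
  fin_cases i <;> fin_cases j <;>
    (simp [Xm, Matrix.mul_apply, Fin.sum_univ_five, Matrix.diagonal, Matrix.vecHead,
      Matrix.vecTail]; try ring)

/-- The comparison function used to separate `m`-brackets from `s`-brackets. -/
def fcmp (A : Matrix (Fin 5) (Fin 5) ℝ) : ℝ :=
  2 * ((A * A) * (A * A)).trace - ((A * A).trace)^2

lemma fcmp_cont : Continuous fcmp := by
  have h1 : Continuous fun A : Matrix (Fin 5) (Fin 5) ℝ => A * A :=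
    continuous_id.matrix_mul continuous_id
  have h2 : Continuous fun A : Matrix (Fin 5) (Fin 5) ℝ => ((A * A) * (A * A)).trace :=
    (h1.matrix_mul h1).matrix_trace
  have h3 : Continuous fun A : Matrix (Fin 5) (Fin 5) ℝ => ((A * A).trace)^2 :=
    (h1.matrix_trace).pow 2
  exact (continuous_const.mul h2).sub h3

lemma fcmp_Xm (a b c : ℝ) : fcmp (Xm a b c) = -8 * (a^2+b^2+c^2)^2 := by
  unfold fcmp
  rw [Xm_sq, Matrix.diagonal_mul_diagonal, Matrix.trace_diagonal, Matrix.trace_diagonal]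
  simp [Fin.sum_univ_five]
  ring

lemma card_aux (r : ℝ) (hr : r ≠ 0) :
    Fintype.card {i : Fin 5 // (if i = 0 then (0:ℝ) else r) ≠ 0} = 4 := by
  have he : ∀ i : Fin 5, ((if i = 0 then (0:ℝ) else r) ≠ 0) ↔ ¬ i = 0 := by
    intro i; by_cases h : i = 0 <;> simp [h, hr]
  rw [Fintype.card_congr (Equiv.subtypeEquivRight he), Fintype.card_subtype_compl,
    Fintype.card_subtype_eq]
  rfl

lemma Pleft (a b c : ℝ) :
    Matrix.diagonal (fun i : Fin 5 => if i = 0 then (0:ℝ) else 1) * Xm a b c = Xm a b c := by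
  ext i j
  fin_cases i <;> fin_cases j <;>
    simp [Xm, Matrix.mul_apply, Fin.sum_univ_five, Matrix.diagonal, Matrix.vecHead,
      Matrix.vecTail]

lemma rank_Xm (a b c : ℝ) (h : ¬(a = 0 ∧ b = 0 ∧ c = 0)) : (Xm a b c).rank = 4 := by
  have hn2 : a^2+b^2+c^2 ≠ 0 := by
    intro h0
    exact h ⟨by nlinarith [sq_nonneg a, sq_nonneg b, sq_nonneg c],
      by nlinarith [sq_nonneg a, sq_nonneg b, sq_nonneg c],
      by nlinarith [sq_nonneg a, sq_nonneg b, sq_nonneg c]⟩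
  have hn2' : -(a^2+b^2+c^2) ≠ 0 := neg_ne_zero.mpr hn2
  have h4 : (Xm a b c * Xm a b c).rank = 4 := by
    rw [Xm_sq, Matrix.rank_diagonal, card_aux _ hn2']
  refine le_antisymm ?_ ?_
  · have h1 : (Xm a b c).rank ≤
        (Matrix.diagonal (fun i : Fin 5 => if i = 0 then (0:ℝ) else 1)).rank := by
      conv_lhs => rw [← Pleft a b c]
      exact Matrix.rank_mul_le_left _ _
    rw [Matrix.rank_diagonal, card_aux (1:ℝ) one_ne_zero] at h1
    exact h1
  · calc 4 = (Xm a b c * Xm a b c).rank := h4.symm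
      _ ≤ (Xm a b c).rank := Matrix.rank_mul_le_left _ _

lemma Wm_mul (w1 w2 w3 w4 z1 z2 z3 z4 : ℝ) :
    Wm w1 w2 w3 w4 * Wm z1 z2 z3 z4 =
      !![-(w1*z1+w2*z2+w3*z3+w4*z4),0,0,0,0;
         0, -(w1*z1), -(w1*z2), -(w1*z3), -(w1*z4);
         0, -(w2*z1), -(w2*z2), -(w2*z3), -(w2*z4);
         0, -(w3*z1), -(w3*z2), -(w3*z3), -(w3*z4);
         0, -(w4*z1), -(w4*z2), -(w4*z3), -(w4*z4)] := by
  ext i j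
  fin_cases i <;> fin_cases j <;>
    (simp [Wm, Matrix.mul_apply, Fin.sum_univ_five, Matrix.vecHead, Matrix.vecTail]; try ring)

lemma Wm_bracket (w1 w2 w3 w4 z1 z2 z3 z4 : ℝ) :
    ⁅Wm w1 w2 w3 w4, Wm z1 z2 z3 z4⁆ =
      vecMulVec ![0,z1,z2,z3,z4] ![0,w1,w2,w3,w4] -
      vecMulVec ![0,w1,w2,w3,w4] ![0,z1,z2,z3,z4] := by
  rw [Ring.lie_def, Wm_mul, Wm_mul]
  ext i j
  fin_cases i <;> fin_cases j <;>
    (simp [Matrix.sub_apply, Matrix.vecMulVec_apply, Matrix.vecHead, Matrix.vecTail]; try ring)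

lemma vmv_mul (u v x y : Fin 5 → ℝ) :
    vecMulVec u v * vecMulVec x y = (v ⬝ᵥ x) • vecMulVec u y := by
  ext i j
  simp only [Matrix.mul_apply, Matrix.vecMulVec_apply, Matrix.smul_apply, smul_eq_mul,
    dotProduct]
  rw [Finset.sum_mul]
  refine Finset.sum_congr rfl fun k _ => by ring

lemma trace_vmv (u v : Fin 5 → ℝ) : (vecMulVec u v).trace = u ⬝ᵥ v := by
  simp [Matrix.trace, Matrix.diag, Matrix.vecMulVec_apply, dotProduct]

lemma rank_vmv_sub (z w : Fin 5 → ℝ) :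
    (vecMulVec z w - vecMulVec w z).rank ≤ 2 := by
  have hr : LinearMap.range (vecMulVec z w - vecMulVec w z).mulVecLin ≤
      Submodule.span ℝ {z, w} := by
    rintro y ⟨x, rfl⟩
    rw [Submodule.mem_span_pair]
    refine ⟨w ⬝ᵥ x, -(z ⬝ᵥ x), ?_⟩
    funext i
    simp only [Matrix.mulVecLin_apply, Matrix.mulVec, Matrix.sub_apply,
      Matrix.vecMulVec_apply, dotProduct, Pi.add_apply, Pi.smul_apply, smul_eq_mul,
      Pi.neg_apply, Finset.mul_sum]
    rw [Finset.sum_congr rfl (fun k _ => by ring : ∀ k ∈ Finset.univ,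
      (z i * w k - w i * z k) * x k = w k * x k * z i - z k * x k * w i),
      Finset.sum_sub_distrib, ← Finset.sum_mul, ← Finset.sum_mul]
    ring
  calc (vecMulVec z w - vecMulVec w z).rank
      ≤ Module.finrank ℝ (Submodule.span ℝ ({z, w} : Set (Fin 5 → ℝ))) :=
        Submodule.finrank_mono hr
    _ ≤ 2 := by
        refine le_trans (finrank_span_le_card _) ?_
        classical
        rw [Set.toFinset_insert, Set.toFinset_singleton]
        exact (Finset.card_insert_le _ _).trans (by simp)

lemma sq_vmv (z w : Fin 5 → ℝ) :
    (vecMulVec z w - vecMulVec w z) * (vecMulVec z w - vecMulVec w z) =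
      (w ⬝ᵥ z) • vecMulVec z w - (w ⬝ᵥ w) • vecMulVec z z
        - (z ⬝ᵥ z) • vecMulVec w w + (w ⬝ᵥ z) • vecMulVec w z := by
  rw [sub_mul, mul_sub, mul_sub, vmv_mul, vmv_mul, vmv_mul, vmv_mul]
  rw [dotProduct_comm z w]
  abel

lemma fcmp_vmv (z w : Fin 5 → ℝ) : fcmp (vecMulVec z w - vecMulVec w z) = 0 := by
  unfold fcmp
  rw [sq_vmv]
  simp only [sub_mul, add_mul, mul_sub, mul_add, smul_mul_assoc, mul_smul_comm, vmv_mul,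
    Matrix.trace_add, Matrix.trace_sub, Matrix.trace_smul, trace_vmv, smul_eq_mul,
    smul_smul]
  rw [dotProduct_comm z w]
  ring

lemma vmv_comb (w1 w2 w3 w4 z1 z2 z3 z4 : ℝ) :
    vecMulVec ![0,z1,z2,z3,z4] ![0,w1,w2,w3,w4] - vecMulVec ![0,w1,w2,w3,w4] ![0,z1,z2,z3,z4]
      = (z1*w2 - w1*z2) • E 1 2 + ((z1*w3 - w1*z3) • E 1 3 + ((z1*w4 - w1*z4) • E 1 4 +
        ((z2*w3 - w2*z3) • E 2 3 + ((z2*w4 - w2*z4) • E 2 4 + (z3*w4 - w3*z4) • E 3 4)))) := by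
  ext i j
  fin_cases i <;> fin_cases j <;>
    (simp [E, Matrix.single, Matrix.of_apply, Matrix.vecMulVec_apply,
      Matrix.vecHead, Matrix.vecTail]; try ring)

lemma W_eq_Wm (W : Matrix (Fin 5) (Fin 5) ℝ) (hsk : ∀ i j : Fin 5, W i j = -W j i)
    (h12 : W 1 2 = 0) (h13 : W 1 3 = 0) (h14 : W 1 4 = 0)
    (h23 : W 2 3 = 0) (h24 : W 2 4 = 0) (h34 : W 3 4 = 0) :
    W = Wm (W 0 1) (W 0 2) (W 0 3) (W 0 4) := by
  ext i j
  fin_cases i <;> fin_cases j <;>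
    simp [Wm, Matrix.vecHead, Matrix.vecTail] <;>
    linarith [hsk 0 0, hsk 1 1, hsk 2 2, hsk 3 3, hsk 4 4, hsk 1 0, hsk 2 0, hsk 3 0,
      hsk 4 0, hsk 2 1, hsk 3 1, hsk 4 1, hsk 3 2, hsk 4 2, hsk 4 3]


/-- For the chain `su(2) ⊂ so(4) ⊂ so(5)`, where `su(2)` is one normal factor
of `so(4)` (the lower-right block) and `m = so(4) ⊖ su(2)` is the other factor,
every nonzero bracket of two elements of `m` has rank 4, every bracket of two
elements of `s = so(5) ⊖ so(4)` has rank at most 2, and consequently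
`{[U,V] : U,V ∈ m} ∩ closure {[W,Z]ᵏ : W,Z ∈ s} = {0}`. -/
theorem stmt7 (h k m s : Submodule ℝ (Matrix (Fin 5) (Fin 5) ℝ))
    (hh : h = Submodule.span ℝ ({E 1 2 + E 3 4, E 1 3 - E 2 4, E 1 4 + E 2 3} :
      Set (Matrix (Fin 5) (Fin 5) ℝ)))
    (hk : k = Submodule.span ℝ ({E 1 2, E 1 3, E 1 4, E 2 3, E 2 4, E 3 4} :
      Set (Matrix (Fin 5) (Fin 5) ℝ)))
    (hm : m = k ⊓ perp h) (hs : s = so 5 ⊓ perp k)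
    (Pk : Matrix (Fin 5) (Fin 5) ℝ →ₗ[ℝ] Matrix (Fin 5) (Fin 5) ℝ)
    (hPk : IsOrthProj k Pk) :
    (∀ U ∈ m, ∀ V ∈ m, (⁅U, V⁆ : Matrix (Fin 5) (Fin 5) ℝ) ≠ 0 →
      (⁅U, V⁆ : Matrix (Fin 5) (Fin 5) ℝ).rank = 4) ∧
    (∀ W ∈ s, ∀ Z ∈ s, (⁅W, Z⁆ : Matrix (Fin 5) (Fin 5) ℝ).rank ≤ 2) ∧
    {x : Matrix (Fin 5) (Fin 5) ℝ | ∃ U ∈ m, ∃ V ∈ m, x = ⁅U, V⁆} ∩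
      closure {x : Matrix (Fin 5) (Fin 5) ℝ | ∃ W ∈ s, ∃ Z ∈ s, x = Pk ⁅W, Z⁆}
      = {0} := by
    -- generators of `h` belong to `h`
  have hg1 : E 1 2 + E 3 4 ∈ h := hh ▸ Submodule.subset_span (by simp)
  have hg2 : E 1 3 - E 2 4 ∈ h := hh ▸ Submodule.subset_span (by simp)
  have hg3 : E 1 4 + E 2 3 ∈ h := hh ▸ Submodule.subset_span (by simp)
  -- membership in `m` forces the explicit `Xm` form
  have hmem_m : ∀ U ∈ m, ∃ a b c : ℝ, U = Xm a b c := by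
    intro U hU
    rw [hm, Submodule.mem_inf] at hU
    obtain ⟨hUk, hUp⟩ := hU
    rw [hk] at hUk
    simp only [Submodule.mem_span_insert, Submodule.mem_span_singleton] at hUk
    obtain ⟨x1, _, ⟨x2, _, ⟨x3, _, ⟨x4, _, ⟨x5, _, ⟨x6, rfl⟩, rfl⟩, rfl⟩, rfl⟩, rfl⟩, rfl⟩ := hUk
    rw [Ym_eq]
    have e1 := hUp _ hg1
    have e2 := hUp _ hg2
    have e3 := hUp _ hg3
    rw [Ym_eq, ip_Ym_one] at e1
    rw [Ym_eq, ip_Ym_two] at e2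
    rw [Ym_eq, ip_Ym_three] at e3
    refine ⟨x1, x2, x3, ?_⟩
    rw [← Ym_Xm]
    have hx6 : x6 = -x1 := by linarith
    have hx5 : x5 = x2 := by linarith
    have hx4 : x4 = -x3 := by linarith
    rw [hx4, hx5, hx6]
  -- membership in `s` forces the explicit `Wm` form
  have hmem_s : ∀ W ∈ s, ∃ w1 w2 w3 w4 : ℝ, W = Wm w1 w2 w3 w4 := by
    intro W hW
    rw [hs, Submodule.mem_inf] at hW
    obtain ⟨hWso, hWp⟩ := hW
    have hskT : Wᵀ = -W := hWso
    have hsk : ∀ i j : Fin 5, W i j = -W j i := by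
      intro i j
      have := congrFun (congrFun hskT j) i
      simpa [Matrix.transpose_apply] using this
    have hz : ∀ i j : Fin 5, E i j ∈ ({E 1 2, E 1 3, E 1 4, E 2 3, E 2 4, E 3 4} :
        Set (Matrix (Fin 5) (Fin 5) ℝ)) → W i j = 0 := by
      intro i j hij
      have h0 : ip W (E i j) = 0 := hWp _ (hk ▸ Submodule.subset_span hij)
      rw [ip_E] at h0
      have := hsk i j
      linarith
    exact ⟨W 0 1, W 0 2, W 0 3, W 0 4,
      W_eq_Wm W hsk (hz 1 2 (by simp)) (hz 1 3 (by simp)) (hz 1 4 (by simp))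
        (hz 2 3 (by simp)) (hz 2 4 (by simp)) (hz 3 4 (by simp))⟩
  -- Part 1
  have part1 : ∀ U ∈ m, ∀ V ∈ m, (⁅U, V⁆ : Matrix (Fin 5) (Fin 5) ℝ) ≠ 0 →
      (⁅U, V⁆ : Matrix (Fin 5) (Fin 5) ℝ).rank = 4 := by
    intro U hU V hV hne
    obtain ⟨a, b, c, rfl⟩ := hmem_m U hU
    obtain ⟨a', b', c', rfl⟩ := hmem_m V hV
    rw [Xm_bracket] at hne ⊢
    refine rank_Xm _ _ _ ?_
    rintro ⟨e1, e2, e3⟩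
    exact hne (by rw [e1, e2, e3, Xm_zero])
  -- Part 2
  have part2 : ∀ W ∈ s, ∀ Z ∈ s, (⁅W, Z⁆ : Matrix (Fin 5) (Fin 5) ℝ).rank ≤ 2 := by
    intro W hW Z hZ
    obtain ⟨w1, w2, w3, w4, rfl⟩ := hmem_s W hW
    obtain ⟨z1, z2, z3, z4, rfl⟩ := hmem_s Z hZ
    rw [Wm_bracket]
    exact rank_vmv_sub _ _
  refine ⟨part1, part2, ?_⟩
  -- Part 3
  have hSsub : {x : Matrix (Fin 5) (Fin 5) ℝ | ∃ W ∈ s, ∃ Z ∈ s, x = Pk ⁅W, Z⁆} ⊆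
      fcmp ⁻¹' {0} := by
    rintro y ⟨W, hW, Z, hZ, rfl⟩
    obtain ⟨w1, w2, w3, w4, rfl⟩ := hmem_s W hW
    obtain ⟨z1, z2, z3, z4, rfl⟩ := hmem_s Z hZ
    rw [Wm_bracket, vmv_comb]
    have hkmem : (z1*w2 - w1*z2) • E 1 2 + ((z1*w3 - w1*z3) • E 1 3 + ((z1*w4 - w1*z4) • E 1 4 +
        ((z2*w3 - w2*z3) • E 2 3 + ((z2*w4 - w2*z4) • E 2 4 + (z3*w4 - w3*z4) • E 3 4)))) ∈ k := by
      rw [hk]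
      refine Submodule.add_mem _ (Submodule.smul_mem _ _ (Submodule.subset_span (by simp)))
        (Submodule.add_mem _ (Submodule.smul_mem _ _ (Submodule.subset_span (by simp)))
          (Submodule.add_mem _ (Submodule.smul_mem _ _ (Submodule.subset_span (by simp)))
            (Submodule.add_mem _ (Submodule.smul_mem _ _ (Submodule.subset_span (by simp)))
              (Submodule.add_mem _ (Submodule.smul_mem _ _ (Submodule.subset_span (by simp)))
                (Submodule.smul_mem _ _ (Submodule.subset_span (by simp)))))))
    rw [hPk.2.1 _ hkmem, ← vmv_comb]
    exact fcmp_vmv _ _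
  have hclosed : closure {x : Matrix (Fin 5) (Fin 5) ℝ | ∃ W ∈ s, ∃ Z ∈ s, x = Pk ⁅W, Z⁆} ⊆
      fcmp ⁻¹' {0} :=
    closure_minimal hSsub (IsClosed.preimage fcmp_cont isClosed_singleton)
  ext x
  simp only [Set.mem_inter_iff, Set.mem_setOf_eq, Set.mem_singleton_iff]
  constructor
  · rintro ⟨⟨U, hU, V, hV, rfl⟩, hxc⟩
    obtain ⟨a, b, c, rfl⟩ := hmem_m U hU
    obtain ⟨a', b', c', rfl⟩ := hmem_m V hV
    rw [Xm_bracket] at hxc ⊢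
    have hf0 : fcmp (Xm (2*(b*c' - c*b')) (2*(c*a' - a*c')) (2*(a*b' - b*a'))) = 0 :=
      hclosed hxc
    rw [fcmp_Xm] at hf0
    set p := 2*(b*c' - c*b')
    set q := 2*(c*a' - a*c')
    set r := 2*(a*b' - b*a')
    have ht2 : (p^2+q^2+r^2)^2 = 0 := by linarith
    have ht : p^2+q^2+r^2 = 0 := (pow_eq_zero_iff two_ne_zero).mp ht2
    have hp : p = 0 := (pow_eq_zero_iff two_ne_zero).mp
      (by nlinarith [sq_nonneg p, sq_nonneg q, sq_nonneg r])
    have hq : q = 0 := (pow_eq_zero_iff two_ne_zero).mp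
      (by nlinarith [sq_nonneg p, sq_nonneg q, sq_nonneg r])
    have hr : r = 0 := (pow_eq_zero_iff two_ne_zero).mp
      (by nlinarith [sq_nonneg p, sq_nonneg q, sq_nonneg r])
    rw [hp, hq, hr, Xm_zero]
  · rintro rfl
    refine ⟨⟨0, Submodule.zero_mem m, 0, Submodule.zero_mem m, by rw [Ring.lie_def]; simp⟩, ?_⟩
    exact subset_closure ⟨0, Submodule.zero_mem s, 0, Submodule.zero_mem s, by rw [Ring.lie_def]; simp⟩
end
end
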